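/- If D is a principal ideal domain which is a left V-ring, then every finitely generated uniform nonzero left D-module is either simple or isomorphic to D, and in particular is virtually simple. -/

import Mathlib

/-!
If some `x ≠ 0` in `U` is killed by some `a ≠ 0`, then `D ∙ x` is artinian: writing a left ideal
`I ∋ a` as `D b` with `a = u b`, the assignment `I ↦ u D` turns descending chains of such left
ideals into ascending chains of right ideals. So `U` contains a simple submodule, which is
injective since `D` is a V-ring, hence a direct summand; uniformity forces it to be all of `U`.

Otherwise `U` is torsion-free. Two nonzero cyclic submodules `D ∙ x` and `D ∙ u` meet, which gives
a relation `a₀ x + c u = 0` with `c ≠ 0`. The right Ore condition provides `p ≠ 0` and `q` with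
`a₀ p + c q = 0`, and the left Ore condition shows that every relation of `(p, q)` is one of
`(x, u)`. So `D ∙ x ⊔ D ∙ u` is a quotient of the principal left ideal `D p + D q`, hence cyclic.
By induction `U` and each of its nonzero submodules is cyclic and torsion-free, that is, `≅ D`.
Both Ore conditions hold because `D` is left and right noetherian.
-/

def VirtuallySimple (R : Type*) [Ring R] (M : Type*) [AddCommGroup M] [Module R M] : Prop :=
  Nontrivial M ∧ ∀ N : Submodule R M, N ≠ ⊥ → Nonempty (N ≃ₗ[R] M)

universe v

open Submodule OreLocalization MulOpposite
open scoped nonZeroDivisors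

def Module.IsUniform (R M : Type*) [Ring R] [AddCommGroup M] [Module R M] : Prop :=
  ∀ N K : Submodule R M, N ≠ ⊥ → K ≠ ⊥ → N ⊓ K ≠ ⊥

namespace Module.IsUniform

variable {R : Type*} {M : Type v} [Ring R] [AddCommGroup M] [Module R M]

theorem submodule (hM : IsUniform R M) (P : Submodule R M) : IsUniform R P := by
  intro N K hN hK hNK
  have hmap := map_injective_of_injective P.injective_subtype
  refine hM (N.map P.subtype) (K.map P.subtype) ?_ ?_ ?_
  · rwa [Ne, ← Submodule.map_bot P.subtype, hmap.eq_iff]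
  · rwa [Ne, ← Submodule.map_bot P.subtype, hmap.eq_iff]
  · rw [← map_inf _ P.injective_subtype, hNK, Submodule.map_bot]

theorem bijective_of_injective {S : Type v} [AddCommGroup S] [Module R S] [Module.Injective R S]
    [Nontrivial S] (hM : IsUniform R M) {f : S →ₗ[R] M} (hf : Function.Injective f) :
    Function.Bijective f := by
  obtain ⟨r, hr⟩ := Module.Injective.out f hf LinearMap.id
  have hker : LinearMap.ker r = ⊥ := by
    by_contra hne
    obtain ⟨s, hs⟩ := exists_ne (0 : S)
    refine hM _ (LinearMap.range f) hne ((Submodule.ne_bot_iff _).2 ⟨f s, ⟨s, rfl⟩, ?_⟩) ?_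
    · rwa [← map_zero f, hf.ne_iff]
    · rw [eq_bot_iff]
      rintro _ ⟨hk, s, rfl⟩
      rw [SetLike.mem_coe, LinearMap.mem_ker, hr, LinearMap.id_apply] at hk
      rw [hk, map_zero]
      exact zero_mem _
  exact ⟨hf, fun m => ⟨r m, LinearMap.ker_eq_bot.mp hker (hr (r m))⟩⟩

end Module.IsUniform

theorem IsSimpleModule.virtuallySimple {R M : Type*} [Ring R] [AddCommGroup M] [Module R M]
    [IsSimpleModule R M] : VirtuallySimple R M :=
  ⟨IsSimpleModule.nontrivial R M,
    fun N hN => ⟨LinearEquiv.ofTop N ((eq_bot_or_eq_top N).resolve_left hN)⟩⟩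

theorem LinearMap.isPrincipal_range_of_ker_le {R M N P : Type*} [Ring R] [AddCommGroup M]
    [Module R M] [AddCommGroup N] [Module R N] [AddCommGroup P] [Module R P]
    {f : M →ₗ[R] N} {g : M →ₗ[R] P} (h : ker f ≤ ker g) (hf : (range f).IsPrincipal) :
    (range g).IsPrincipal := by
  obtain ⟨⟨t, ht⟩⟩ := hf
  obtain ⟨v, rfl⟩ : t ∈ range f := ht ▸ mem_span_singleton_self t
  refine ⟨⟨g v, le_antisymm ?_ (span_singleton_le_iff_mem _ _ |>.mpr (mem_range_self g v))⟩⟩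
  rintro _ ⟨w, rfl⟩
  obtain ⟨s, hs⟩ := mem_span_singleton.mp (ht ▸ mem_range_self f w)
  have hker : g (w - s • v) = 0 := h (by simp [hs])
  rw [map_sub, map_smul, sub_eq_zero] at hker
  exact mem_span_singleton.mpr ⟨s, hker.symm⟩

section OreDomain

variable {D : Type*} [Ring D] [IsDomain D]

theorem smul_add_smul_eq_zero_of_relation [OreSet D⁰] {M N : Type*} [AddCommGroup M] [Module D M]
    [Module.IsTorsionFree D M] [AddCommGroup N] [Module D N] [Module.IsTorsionFree D N]
    {x u : M} {y v : N} {a₀ c : D} (hx : x ≠ 0) (hc : c ≠ 0)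
    (hxu : a₀ • x + c • u = 0) (hyv : a₀ • y + c • v = 0) {a b : D} (h : a • x + b • u = 0) :
    a • y + b • v = 0 := by
  obtain ⟨r, s, hrs⟩ := oreCondition b ⟨c, mem_nonZeroDivisors_of_ne_zero hc⟩
  have hsb : ∀ w : M, (s : D) • b • w = r • c • w := fun w => by rw [← mul_smul, hrs, mul_smul]
  have hsa : s * a = r * a₀ := by
    have : (s * a - r * a₀) • x = 0 := by
      calc (s * a - r * a₀) • x = (s : D) • (a • x + b • u) - r • (a₀ • x + c • u) := by
            rw [sub_smul, mul_smul, mul_smul, smul_add, smul_add, hsb]; abel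
        _ = 0 := by rw [h, hxu, smul_zero, smul_zero, sub_zero]
    exact sub_eq_zero.mp ((smul_eq_zero_iff_left hx).mp this)
  have : (s : D) • (a • y + b • v) = 0 := by
    calc (s : D) • (a • y + b • v) = r • (a₀ • y + c • v) := by
          simp only [smul_add, ← mul_smul, hsa, hrs]
      _ = 0 := by rw [hyv, smul_zero]
  exact (smul_eq_zero_iff_right (nonZeroDivisors.ne_zero s.2)).mp this

theorem exists_ne_zero_mul_add_mul_eq_zero [OreSet Dᵐᵒᵖ⁰] (a : D) {c : D} (hc : c ≠ 0) :
    ∃ p q : D, p ≠ 0 ∧ a * p + c * q = 0 := by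
  obtain ⟨r, s, hrs⟩ :=
    oreCondition (op a) ⟨op c, mem_nonZeroDivisors_of_ne_zero ((op_ne_zero_iff c).mpr hc)⟩
  refine ⟨unop s, -unop r, (unop_ne_zero_iff _).mpr (nonZeroDivisors.ne_zero s.2), ?_⟩
  have := congrArg unop hrs
  rw [unop_mul, unop_mul, unop_op, unop_op] at this
  rw [this, mul_neg, add_neg_cancel]

end OreDomain

section PrincipalOreDomain

open LinearMap (ker toSpanSingleton toSpanSingleton_apply)

variable {D : Type*} [Ring D] [IsDomain D] [IsPrincipalIdealRing D] [OreSet D⁰] [OreSet Dᵐᵒᵖ⁰]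
  {M : Type*} [AddCommGroup M] [Module D M] [Module.IsTorsionFree D M]

theorem isPrincipal_span_singleton_sup_of_inf_ne_bot {x u : M} (h : D ∙ x ⊓ D ∙ u ≠ ⊥) :
    (D ∙ x ⊔ D ∙ u).IsPrincipal := by
  obtain ⟨z, hz, hz0⟩ := (Submodule.ne_bot_iff _).mp h
  obtain ⟨⟨a₀, rfl⟩, ⟨e, he⟩⟩ := And.imp mem_span_singleton.mp mem_span_singleton.mp hz
  have hc : -e ≠ 0 := by
    rintro hc
    rw [neg_eq_zero.mp hc, zero_smul] at he
    exact hz0 he.symm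
  have hxu : a₀ • x + (-e) • u = 0 := by rw [neg_smul, he, add_neg_cancel]
  obtain ⟨p, q, hp, hpq⟩ := exists_ne_zero_mul_add_mul_eq_zero a₀ hc
  have hker : ker ((toSpanSingleton D D p).coprod (toSpanSingleton D D q)) ≤
      ker ((toSpanSingleton D M x).coprod (toSpanSingleton D M u)) := by
    rintro ⟨a, b⟩ hab
    simp only [LinearMap.mem_ker, LinearMap.coprod_apply, toSpanSingleton_apply] at hab ⊢
    exact smul_add_smul_eq_zero_of_relation hp hc hpq hxu hab
  rw [LinearMap.span_singleton_eq_range, LinearMap.span_singleton_eq_range,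
    ← LinearMap.range_coprod]
  exact LinearMap.isPrincipal_range_of_ker_le hker (IsPrincipalIdealRing.principal _)

namespace Module.IsUniform

theorem isPrincipal_of_fg (hM : IsUniform D M) {N : Submodule D M} (hN : N.FG) :
    N.IsPrincipal := by
  induction N, hN using Submodule.fg_induction with
  | singleton x => exact ⟨⟨x, rfl⟩⟩
  | sup N₁ N₂ _ _ h₁ h₂ =>
    obtain ⟨⟨x, rfl⟩⟩ := h₁
    obtain ⟨⟨u, rfl⟩⟩ := h₂
    by_cases hx : D ∙ x = ⊥
    · rw [hx, bot_sup_eq]; exact ⟨⟨u, rfl⟩⟩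
    by_cases hu : D ∙ u = ⊥
    · rw [hu, sup_bot_eq]; exact ⟨⟨x, rfl⟩⟩
    exact isPrincipal_span_singleton_sup_of_inf_ne_bot (hM _ _ hx hu)

theorem nonempty_linearEquiv [Module.Finite D M] [Nontrivial M] (hM : IsUniform D M) :
    Nonempty (M ≃ₗ[D] D) := by
  obtain ⟨⟨y, hy⟩⟩ := hM.isPrincipal_of_fg (Module.Finite.fg_top (R := D) (M := M))
  have hy0 : y ≠ 0 := by rintro rfl; simp at hy
  exact ⟨((LinearEquiv.toSpanNonzeroSingleton D M y hy0).trans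
    (LinearEquiv.ofTop _ hy.symm)).symm⟩

theorem virtuallySimple [Module.Finite D M] [Nontrivial M] (hM : IsUniform D M) :
    VirtuallySimple D M := by
  obtain ⟨e⟩ := hM.nonempty_linearEquiv
  refine ⟨inferInstance, fun N hN => ?_⟩
  have : Nontrivial N := nontrivial_iff_ne_bot.mpr hN
  obtain ⟨eN⟩ := (hM.submodule N).nonempty_linearEquiv
  exact ⟨eN.trans e.symm⟩

end Module.IsUniform

end PrincipalOreDomain

section Artinian

variable {D : Type*} [Ring D] [IsDomain D]

theorem eq_mul_iff_eq_mul_of_mul_eq_mul {u b u' b' : D} (h : u * b = u' * b') (h0 : u * b ≠ 0)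
    (d : D) : b = d * b' ↔ u' = u * d := by
  have hu : u ≠ 0 := left_ne_zero_of_mul h0
  have hb' : b' ≠ 0 := right_ne_zero_of_mul (h ▸ h0)
  constructor
  · rintro rfl
    exact mul_right_cancel₀ hb' (by rw [← h, mul_assoc])
  · rintro rfl
    exact mul_left_cancel₀ hu (by rw [h, mul_assoc])

variable [IsPrincipalIdealRing D] [IsNoetherianRing Dᵐᵒᵖ]

theorem wellFoundedLT_ideal_mem {a : D} (ha : a ≠ 0) : WellFoundedLT {I : Ideal D // a ∈ I} := by
  have hfactor (I : {I : Ideal D // a ∈ I}) : ∃ u, u * IsPrincipal.generator I.1 = a := by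
    obtain ⟨u, hu⟩ := (IsPrincipal.mem_iff_eq_smul_generator I.1).mp I.2
    exact ⟨u, hu.symm⟩
  choose u hu using hfactor
  have key (I J : {I : Ideal D // a ∈ I}) :
      J ≤ I ↔ Ideal.span {op (u I)} ≤ Ideal.span {op (u J)} := by
    have hJI := eq_mul_iff_eq_mul_of_mul_eq_mul ((hu J).trans (hu I).symm) (by rwa [hu J])
    rw [← Subtype.coe_le_coe, ← IsPrincipal.span_singleton_generator J.1,
      span_singleton_le_iff_mem, IsPrincipal.mem_iff_eq_smul_generator, Ideal.span,
      span_singleton_le_iff_mem, mem_span_singleton]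
    simp_rw [smul_eq_mul, hJI]
    exact ⟨fun ⟨d, hd⟩ => ⟨op d, by rw [hd, op_mul]⟩,
      fun ⟨d, hd⟩ => ⟨unop d, by rw [← unop_op (u I), ← hd, unop_mul, unop_op]⟩⟩
  refine StrictAnti.wellFoundedLT (f := fun I => Ideal.span {op (u I)}) fun I J hIJ => ?_
  exact lt_of_le_not_ge ((key J I).mp hIJ.le) fun h => hIJ.not_ge ((key I J).mpr h)

theorem isArtinian_span_singleton_of_smul_eq_zero {M : Type*} [AddCommGroup M] [Module D M]
    {a : D} (ha : a ≠ 0) {x : M} (hax : a • x = 0) : IsArtinian D (D ∙ x) := by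
  have := wellFoundedLT_ideal_mem ha
  let g := LinearMap.toSpanSingleton D (D ∙ x) ⟨x, mem_span_singleton_self x⟩
  have hg : Function.Surjective g := by
    rintro ⟨y, hy⟩
    obtain ⟨s, rfl⟩ := mem_span_singleton.mp hy
    exact ⟨s, rfl⟩
  have hga : g a = 0 := Subtype.ext hax
  exact StrictMono.wellFoundedLT (β := {I : Ideal D // a ∈ I})
    (f := fun N => ⟨N.comap g, by rw [mem_comap, hga]; exact N.zero_mem⟩)
    fun N N' h => comap_strictMono_of_surjective hg h

end Artinian

/-- If `D` is a principal ideal domain which is a left V-ring, then every finitely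
generated uniform nonzero left `D`-module is simple or isomorphic to `D`, and in
particular virtually simple. -/
theorem stmt14 (D : Type u) [Ring D] [IsDomain D]
    (hleft : ∀ I : Ideal D, I.IsPrincipal)
    (hright : ∀ I : Ideal Dᵐᵒᵖ, I.IsPrincipal)
    (hV : ∀ (S : Type u) [AddCommGroup S] [Module D S], IsSimpleModule D S →
      Module.Injective D S)
    (U : Type u) [AddCommGroup U] [Module D U] [Module.Finite D U] [Nontrivial U]
    (huniform : ∀ N K : Submodule D U, N ≠ ⊥ → K ≠ ⊥ → N ⊓ K ≠ ⊥) :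
    (IsSimpleModule D U ∨ Nonempty (U ≃ₗ[D] D)) ∧ VirtuallySimple D U := by
  have : IsPrincipalIdealRing D := ⟨hleft⟩
  have : IsPrincipalIdealRing Dᵐᵒᵖ := ⟨hright⟩
  obtain ⟨_⟩ := nonempty_oreSet_of_strongRankCondition (R := D)
  obtain ⟨_⟩ := nonempty_oreSet_of_strongRankCondition (R := Dᵐᵒᵖ)
  by_cases htf : Module.IsTorsionFree D U
  · exact ⟨Or.inr (Module.IsUniform.nonempty_linearEquiv huniform),
      Module.IsUniform.virtuallySimple huniform⟩
  obtain ⟨a, x, hax, ha, hx⟩ : ∃ (a : D) (x : U), a • x = 0 ∧ a ≠ 0 ∧ x ≠ 0 := by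
    by_contra! h
    exact htf (.of_smul_eq_zero fun a x hax => or_iff_not_imp_left.mpr (h a x hax))
  have := isArtinian_span_singleton_of_smul_eq_zero ha hax
  have : Nontrivial (D ∙ x) := nontrivial_span_singleton hx
  have : IsAtomic (Submodule D (D ∙ x)) := isAtomic_of_orderBot_wellFounded_lt wellFounded_lt
  obtain ⟨S, hS⟩ := IsAtomic.exists_atom (Submodule D (D ∙ x))
  have : IsSimpleModule D S := isSimpleModule_iff_isAtom.mpr hS
  have := hV S this
  have := IsSimpleModule.nontrivial D S
  have hbij := Module.IsUniform.bijective_of_injective huniform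
    (f := (D ∙ x).subtype ∘ₗ S.subtype) ((D ∙ x).injective_subtype.comp S.injective_subtype)
  have : IsSimpleModule D U := .congr (LinearEquiv.ofBijective _ hbij).symm
  exact ⟨Or.inl this, IsSimpleModule.virtuallySimple⟩
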